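/- arXiv:1807.00766 — 6 statements merged into one kernel-verified Lean document; each statement's English description precedes it below -/
import Mathlib

section
/- The group SL_2(Z) admits a presentation with generators s and t and relations s^4 = 1 and (st)^3 = s^2, where s is the matrix [[0,-1],[1,0]] and t is the matrix [[1,1],[0,1]]. -/
/-!
`S` and `T` generate `SL(2, ℤ)`, so the presented group `P` maps onto it and only injectivity is
at stake. In `P` the element `z = s²` is central, `z² = 1`, and `z ↦ S² = -1 ≠ 1`; so it suffices
that the kernel lies in `⟨z⟩`. Send `s ↦ a`, `t ↦ ab` into `ℤ/2 ∗ ℤ/3 = ⟨a⟩ ∗ ⟨b⟩`. Composed with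
the Möbius action on the upper half-plane, `P → SL(2, ℤ)` factors through this map via
`a ↦ S`, `b ↦ ST`, and `ℤ/2 ∗ ℤ/3` acts faithfully by ping-pong: `S` sends `Re < 0` into
`Re > 0`, while `ST` and `(ST)² = T⁻¹S` send `Re > 0` into `Re < 0`. Finally `P → ℤ/2 ∗ ℤ/3`
has kernel inside `⟨z⟩`, because `a ↦ s`, `b ↦ st` inverts it modulo `z`.
-/

open FreeGroup

/-- The relations of the presentation `⟨s, t ∣ s⁴ = 1, (st)³ = s²⟩`:
`s` corresponds to `of 0` and `t` to `of 1`. -/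
def sl2PresRels : Set (FreeGroup (Fin 2)) :=
  {(of 0) ^ 4, ((of 0) * (of 1)) ^ 3 * ((of 0) ^ 2)⁻¹}

open Matrix MatrixGroups ModularGroup UpperHalfPlane Monoid

namespace Subgroup

variable {G : Type*} [Group G]

lemma normal_zpowers_of_mem_center {z : G} (hz : z ∈ center G) : (zpowers z).Normal :=
  ⟨fun n hn g => by
    rwa [mem_center_iff.mp ((zpowers_le.mpr hz) hn) g, mul_inv_cancel_right]⟩

end Subgroup

namespace MonoidHom

variable {G H : Type*} [Group G] [Group H]

lemma injective_of_ker_le_zpowers (f : G →* H) {z : G} (hz : z ^ 2 = 1) (hfz : f z ≠ 1)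
    (hker : f.ker ≤ Subgroup.zpowers z) : Function.Injective f := by
  refine (injective_iff_map_eq_one f).mpr fun g hg => ?_
  obtain ⟨k, rfl : z ^ k = g⟩ := hker hg
  have hz' : z ^ (2 : ℤ) = 1 := mod_cast hz
  rcases Int.emod_two_eq_zero_or_one k with hk | hk <;>
    rw [zpow_eq_zpow_emod k hz', hk] at hg ⊢
  · exact zpow_zero z
  · exact absurd (by simpa using hg) hfz

end MonoidHom

section CyclicFreeProduct

variable {G : Type*} [Group G]

def zmodPowHom {n : ℕ} (a : G) (ha : a ^ n = 1) : Multiplicative (ZMod n) →* G :=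
  AddMonoidHom.toMultiplicativeLeft <|
    ZMod.lift n ⟨zmultiplesHom (Additive G) (.ofMul a), by simp [← ofMul_pow, ha]⟩

lemma zmodPowHom_ofAdd_intCast {n : ℕ} (a : G) (ha : a ^ n = 1) (k : ℤ) :
    zmodPowHom a ha (.ofAdd (k : ZMod n)) = a ^ k := by
  simp [zmodPowHom, ZMod.lift_coe]

lemma zmodPowHom_ofAdd_one {n : ℕ} (a : G) (ha : a ^ n = 1) :
    zmodPowHom a ha (.ofAdd 1) = a := by
  simpa using zmodPowHom_ofAdd_intCast a ha 1

abbrev Z2Z3 := CoprodI fun i : Fin 2 => Multiplicative (ZMod (![2, 3] i))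

namespace Z2Z3

def a : Z2Z3 := CoprodI.of (i := 0) (.ofAdd 1)
def b : Z2Z3 := CoprodI.of (i := 1) (.ofAdd 1)

lemma a_sq : a ^ 2 = 1 := by
  rw [a, ← map_pow]; exact (map_eq_one_iff _ (CoprodI.of_injective _)).mpr (by decide)

lemma b_cube : b ^ 3 = 1 := by
  rw [b, ← map_pow]; exact (map_eq_one_iff _ (CoprodI.of_injective _)).mpr (by decide)

def lift (x y : G) (hx : x ^ 2 = 1) (hy : y ^ 3 = 1) : Z2Z3 →* G :=
  CoprodI.lift fun
    | 0 => zmodPowHom x hx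
    | 1 => zmodPowHom y hy

variable {x y : G} (hx : x ^ 2 = 1) (hy : y ^ 3 = 1)

@[simp] lemma lift_a : lift x y hx hy a = x := by
  rw [lift, a, CoprodI.lift_of]; exact zmodPowHom_ofAdd_one x hx

@[simp] lemma lift_b : lift x y hx hy b = y := by
  rw [lift, b, CoprodI.lift_of]; exact zmodPowHom_ofAdd_one y hy

theorem lift_injective_of_ping_pong {α : Type*} [MulAction G α] {X Y : Set α}
    (hX : X.Nonempty) (hY : Y.Nonempty) (hXY : Disjoint X Y) (hxY : Set.MapsTo (x • ·) Y X)
    (hyX : Set.MapsTo (y • ·) X Y) (hy2X : Set.MapsTo (y ^ 2 • ·) X Y) :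
    Function.Injective (lift x y hx hy) := by
  refine CoprodI.lift_injective_of_ping_pong _ (Or.inr ⟨1, ?_⟩) ![X, Y] ?_ ?_ ?_
  · simp [Cardinal.mk_fintype]
  · intro i; fin_cases i <;> assumption
  · intro i j hij
    fin_cases i <;> fin_cases j <;> simp_all [Function.onFun, hXY.symm]
  · intro i j hij h hh
    rw [← Set.image_smul]
    fin_cases i <;> fin_cases j <;> simp only [ne_eq, not_true_eq_false] at hij
    · have h2 : ∀ h : Multiplicative (ZMod 2), h ≠ 1 → h = .ofAdd 1 := by decide
      obtain rfl := h2 h hh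
      exact (zmodPowHom_ofAdd_one x hx ▸ hxY).image_subset
    · have h3 : ∀ h : Multiplicative (ZMod 3), h ≠ 1 → h = .ofAdd 1 ∨ h = .ofAdd 2 := by
        decide
      obtain rfl | rfl := h3 h hh
      · exact (zmodPowHom_ofAdd_one y hy ▸ hyX).image_subset
      · have : zmodPowHom y hy (.ofAdd 2) = y ^ 2 := by
          simpa using zmodPowHom_ofAdd_intCast y hy 2
        exact (this ▸ hy2X).image_subset

end Z2Z3

end CyclicFreeProduct

namespace ModularGroup

lemma S_pow_four : S ^ 4 = 1 := by decide

lemma S_mul_T_pow_three : (S * T) ^ 3 = S ^ 2 := by decide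

lemma S_sq : S ^ 2 = -1 := by decide

lemma S_mul_T_sq : (S * T) ^ 2 = T⁻¹ * S := by decide

end ModularGroup

namespace UpperHalfPlane

lemma re_S_smul (z : ℍ) : (S • z).re = -z.re / Complex.normSq (z : ℂ) := by
  rw [modular_S_smul, ← coe_re, coe_mk, Complex.inv_re, Complex.neg_re, Complex.normSq_neg,
    coe_re, neg_div]

lemma re_S_smul_pos_iff (z : ℍ) : 0 < (S • z).re ↔ z.re < 0 := by
  rw [re_S_smul, div_pos_iff_of_pos_right z.normSq_pos, neg_pos]

lemma re_S_smul_neg_iff (z : ℍ) : (S • z).re < 0 ↔ 0 < z.re := by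
  rw [re_S_smul, neg_div, neg_lt_zero, div_pos_iff_of_pos_right z.normSq_pos]

lemma S_sq_smul (z : ℍ) : S ^ 2 • z = z := by
  rw [S_sq, SL_neg_smul, one_smul]

noncomputable def moebius : SL(2, ℤ) →* Equiv.Perm ℍ := MulAction.toPermHom _ _

lemma moebius_S_sq : moebius S ^ 2 = 1 := by
  rw [← map_pow]; exact Equiv.ext S_sq_smul

end UpperHalfPlane

namespace Z2Z3

noncomputable def toMoebius : Z2Z3 →* Equiv.Perm ℍ :=
  lift (moebius S) (moebius (S * T)) moebius_S_sq
    (by rw [← map_pow, S_mul_T_pow_three, map_pow, moebius_S_sq])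

@[simp] lemma toMoebius_a : toMoebius a = moebius S := lift_a ..

@[simp] lemma toMoebius_b : toMoebius b = moebius (S * T) := lift_b ..

lemma toMoebius_injective : Function.Injective toMoebius := by
  refine lift_injective_of_ping_pong _ _ (X := {z : ℍ | 0 < z.re}) (Y := {z | z.re < 0})
    ⟨T • I, show 0 < (T • I).re by rw [re_T_smul, I_re]; norm_num⟩
    ⟨T⁻¹ • I, show (T⁻¹ • I).re < 0 by rw [re_T_inv_smul, I_re]; norm_num⟩
    (Set.disjoint_left.mpr fun z (h₁ : 0 < z.re) (h₂ : z.re < 0) => lt_asymm h₁ h₂) ?_ ?_ ?_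
  · exact fun z hz => (re_S_smul_pos_iff z).mpr hz
  · intro z (hz : 0 < z.re)
    change ((S * T) • z).re < 0
    rw [mul_smul, re_S_smul_neg_iff, re_T_smul]
    linarith
  · rw [← map_pow, S_mul_T_sq]
    intro z (hz : 0 < z.re)
    change ((T⁻¹ * S) • z).re < 0
    rw [mul_smul, re_T_inv_smul, sub_neg]
    linarith [(re_S_smul_neg_iff z).mpr hz]

end Z2Z3

namespace SL2Pres

abbrev P := PresentedGroup sl2PresRels

def s : P := PresentedGroup.of 0
def t : P := PresentedGroup.of 1

lemma s_pow_four : s ^ 4 = 1 := by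
  have := PresentedGroup.one_of_mem (rels := sl2PresRels) (Set.mem_insert _ _)
  rwa [map_pow] at this

lemma s_mul_t_pow_three : (s * t) ^ 3 = s ^ 2 := by
  have := PresentedGroup.one_of_mem (rels := sl2PresRels) (Set.mem_insert_of_mem _ rfl)
  rwa [_root_.map_mul, _root_.map_inv, map_pow, map_pow, _root_.map_mul, mul_inv_eq_one] at this

section lift

variable {G : Type*} [Group G] {x y : G}

def lift (x y : G) (h4 : x ^ 4 = 1) (h3 : (x * y) ^ 3 = x ^ 2) : P →* G :=
  PresentedGroup.toGroup (f := ![x, y]) (by rintro r (rfl | rfl) <;> simp [h4, h3])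

variable (h4 : x ^ 4 = 1) (h3 : (x * y) ^ 3 = x ^ 2)

@[simp] lemma lift_s : lift x y h4 h3 s = x := PresentedGroup.toGroup.of _

@[simp] lemma lift_t : lift x y h4 h3 t = y := PresentedGroup.toGroup.of _

lemma hom_ext {f g : P →* G} (hs : f s = g s) (ht : f t = g t) : f = g :=
  PresentedGroup.ext fun i => by fin_cases i <;> assumption

end lift

open Subgroup

lemma s_sq_mem_center : s ^ 2 ∈ center P := by
  have hs : Commute s (s ^ 2) := Commute.self_pow s 2
  have hst : Commute (s * t) (s ^ 2) := s_mul_t_pow_three ▸ Commute.self_pow (s * t) 3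
  have ht : Commute t (s ^ 2) := by simpa using hs.inv_left.mul_left hst
  refine mem_center_iff.mpr fun g =>
    mem_centralizer_singleton_iff.mp (PresentedGroup.generated_by _ _ ?_ g)
  intro i
  fin_cases i
  exacts [mem_centralizer_singleton_iff.mpr hs.eq, mem_centralizer_singleton_iff.mpr ht.eq]

def toZ2Z3 : P →* Z2Z3 :=
  lift Z2Z3.a (Z2Z3.a * Z2Z3.b) (by rw [pow_mul' Z2Z3.a 2 2, Z2Z3.a_sq, one_pow])
    (by rw [← mul_assoc, ← sq, Z2Z3.a_sq, one_mul, Z2Z3.b_cube])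

lemma ker_toZ2Z3_le_zpowers : toZ2Z3.ker ≤ zpowers (s ^ 2) := by
  have := normal_zpowers_of_mem_center s_sq_mem_center
  have hs : (s : P ⧸ zpowers (s ^ 2)) ^ 2 = 1 := by
    rw [← QuotientGroup.mk_pow, QuotientGroup.eq_one_iff]
    exact mem_zpowers _
  let μ : Z2Z3 →* P ⧸ zpowers (s ^ 2) := Z2Z3.lift (s : P ⧸ zpowers (s ^ 2)) ↑(s * t) hs
    (by rw [← QuotientGroup.mk_pow, s_mul_t_pow_three, QuotientGroup.mk_pow, hs])
  have hμ : μ.comp toZ2Z3 = QuotientGroup.mk' _ :=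
    hom_ext (by simp [μ, toZ2Z3]) (by simp [μ, toZ2Z3, ← mul_assoc, ← sq, hs])
  intro g (hg : toZ2Z3 g = 1)
  rw [← QuotientGroup.eq_one_iff, ← QuotientGroup.mk'_apply, ← hμ, MonoidHom.comp_apply, hg,
    _root_.map_one]

def toSL : P →* SL(2, ℤ) := lift S T S_pow_four S_mul_T_pow_three

lemma toSL_s : toSL s = S := lift_s ..

lemma toSL_t : toSL t = T := lift_t ..

lemma ker_toSL_le_ker_toZ2Z3 : toSL.ker ≤ toZ2Z3.ker := by
  have hcomm : moebius.comp toSL = Z2Z3.toMoebius.comp toZ2Z3 :=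
    hom_ext (by simp [toSL_s, toZ2Z3])
      (by simp [toSL_t, toZ2Z3, ← mul_assoc, ← sq, moebius_S_sq])
  intro g (hg : toSL g = 1)
  rw [MonoidHom.mem_ker, ← map_eq_one_iff _ Z2Z3.toMoebius_injective, ← MonoidHom.comp_apply,
    ← hcomm, MonoidHom.comp_apply, hg, _root_.map_one]

lemma toSL_injective : Function.Injective toSL :=
  toSL.injective_of_ker_le_zpowers (by rw [← pow_mul, s_pow_four])
    (by rw [map_pow, toSL_s]; decide) (ker_toSL_le_ker_toZ2Z3.trans ker_toZ2Z3_le_zpowers)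

lemma toSL_surjective : Function.Surjective toSL := by
  rw [← MonoidHom.range_eq_top, eq_top_iff, ← SpecialLinearGroup.SL2Z_generators, closure_le]
  rintro g (rfl | rfl)
  exacts [⟨s, toSL_s⟩, ⟨t, toSL_t⟩]

end SL2Pres

/-- The group `SL₂(ℤ)` admits a presentation with generators `s`, `t` and relations
`s⁴ = 1`, `(st)³ = s²`, where `s ↦ [[0,-1],[1,0]]` and `t ↦ [[1,1],[0,1]]`. -/
theorem sl2z_presentation :
    ∃ φ : PresentedGroup sl2PresRels ≃* Matrix.SpecialLinearGroup (Fin 2) ℤ,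
      φ (PresentedGroup.of 0) =
        ⟨!![0, -1; 1, 0], by simp [Matrix.det_fin_two_of]⟩ ∧
      φ (PresentedGroup.of 1) =
        ⟨!![1, 1; 0, 1], by simp [Matrix.det_fin_two_of]⟩ :=
  ⟨.ofBijective SL2Pres.toSL ⟨SL2Pres.toSL_injective, SL2Pres.toSL_surjective⟩,
    SL2Pres.toSL_s, SL2Pres.toSL_t⟩
end

section
/- Let S and T be invertible square matrices over a field, with T diagonal, such that S^2 = D·P where D is a nonzero scalar, P is an involutive matrix commuting with T, and (ST)^3 = τ·S^2 for a nonzero scalar τ, and S^4 = D^2·Id. Then (S T^{-1})^3 = (D^2/τ)·Id. -/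
/-- Let `S` and `T` be invertible square matrices over a field, with `T` diagonal, such that
`S² = D • P` where `D` is a nonzero scalar, `P` an involutive matrix commuting with `T`,
`(ST)³ = τ • S²` (in the form `S T S = τ • (T⁻¹ S T⁻¹)`) for a nonzero scalar `τ`, and
`S⁴ = D² • 1`. Then `(S T⁻¹)³ = (D²/τ) • 1`. -/
theorem st_inv_cube {m : Type*} [Fintype m] [DecidableEq m] {k : Type*} [Field k]
    (S T P : Matrix m m k) (D τ : k) (hD : D ≠ 0) (hτ : τ ≠ 0)
    (hS : IsUnit S) (hT : IsUnit T) (hTdiag : T.IsDiag)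
    (hP2 : P * P = 1) (hPT : P * T = T * P)
    (hS2 : S * S = D • P) (hS4 : S ^ 4 = (D ^ 2) • (1 : Matrix m m k))
    (hSTS : S * T * S = τ • (T⁻¹ * S * T⁻¹)) :
    (S * T⁻¹) ^ 3 = (D ^ 2 / τ) • (1 : Matrix m m k) := by
  have hTd : IsUnit T.det := (Matrix.isUnit_iff_isUnit_det T).mp hT
  have hTi : T * T⁻¹ = 1 := Matrix.mul_nonsing_inv T hTd
  have h1 : T⁻¹ * S * T⁻¹ = τ⁻¹ • (S * T * S) := by
    rw [hSTS, smul_smul, inv_mul_cancel₀ hτ, one_smul]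
  have key : (S * T⁻¹) ^ 3 = τ⁻¹ • (S * S * T * (S * S) * T⁻¹) := by
    calc (S * T⁻¹) ^ 3 = S * (T⁻¹ * S * T⁻¹) * (S * T⁻¹) := by
          rw [pow_succ, pow_two]; noncomm_ring
      _ = τ⁻¹ • (S * (S * T * S) * (S * T⁻¹)) := by
          rw [h1, Matrix.mul_smul, Matrix.smul_mul]
      _ = τ⁻¹ • (S * S * T * (S * S) * T⁻¹) := by noncomm_ring
  rw [key, hS2]
  have : (D • P) * T * (D • P) * T⁻¹ = (D * D) • (P * T * P * T⁻¹) := by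
    simp [Matrix.smul_mul, Matrix.mul_smul, smul_smul]
  rw [this]
  have hPTP : P * T * P * T⁻¹ = 1 := by
    rw [hPT, mul_assoc T P P, hP2, mul_one, hTi]
  rw [hPTP, smul_smul, div_eq_inv_mul, pow_two]
end

section
/- Let M be an invertible n×n integer matrix and let θ_1,…,θ_n be nonzero complex numbers such that for each i, the product Π_j θ_j^{M_{ij}} is a root of unity. Then each θ_i is a root of unity. -/
/-!
An integer matrix `M` acts on families `u` in a commutative group by `(M u)ᵢ = ∏ⱼ uⱼ ^ Mᵢⱼ`, the
multiplicative form of `Matrix.mulVec`, and this action is compatible with matrix multiplication.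
Applying `adj M` to `M θ` therefore gives `θ ^ det M`. Torsion elements form a subgroup, so each
`θᵢ ^ det M` is torsion, and as `det M ≠ 0` so is each `θᵢ`.
-/

open Finset

variable {G : Type*} [CommGroup G]

theorem zpow_sum_eq_prod_zpow {ι : Type*} (a : G) (s : Finset ι) (f : ι → ℤ) :
    a ^ (∑ i ∈ s, f i) = ∏ i ∈ s, a ^ f i := by
  induction s using cons_induction <;> simp [sum_cons, prod_cons, zpow_add, *]

theorem IsOfFinOrder.of_zpow {x : G} {d : ℤ} (h : IsOfFinOrder (x ^ d)) (hd : d ≠ 0) :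
    IsOfFinOrder x := by
  have habs : IsOfFinOrder (x ^ d.natAbs) := by
    simpa only [← zpow_mul, Int.mul_sign_self, zpow_natCast] using h.zpow (i := d.sign)
  exact habs.of_pow (Int.natAbs_ne_zero.mpr hd)

namespace Matrix

variable {l m n : Type*} [Fintype n]

def prodZPow (M : Matrix m n ℤ) (u : n → G) : m → G :=
  fun i => ∏ j, u j ^ M i j

theorem prodZPow_mul [Fintype m] (A : Matrix l m ℤ) (B : Matrix m n ℤ) (u : n → G) :
    prodZPow (A * B) u = prodZPow A (prodZPow B u) := by
  funext k
  calc ∏ j, u j ^ (A * B) k j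
      = ∏ j, ∏ i, (u j ^ B i j) ^ A k i := by
        simp only [mul_apply, zpow_sum_eq_prod_zpow, mul_comm (A k _), _root_.zpow_mul]
    _ = ∏ i, ∏ j, (u j ^ B i j) ^ A k i := prod_comm
    _ = ∏ i, (∏ j, u j ^ B i j) ^ A k i := by simp only [prod_zpow]

theorem prodZPow_smul_one [DecidableEq n] (d : ℤ) (u : n → G) (i : n) :
    prodZPow (d • (1 : Matrix n n ℤ)) u i = u i ^ d := by
  rw [prodZPow, prod_eq_single i]
  · simp
  · intro j _ hji
    simp [one_apply_ne' hji]
  · simp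

theorem isOfFinOrder_prodZPow (M : Matrix m n ℤ) {u : n → G} (hu : ∀ j, IsOfFinOrder (u j))
    (i : m) : IsOfFinOrder (prodZPow M u i) := by
  simp only [← CommGroup.mem_torsion] at hu ⊢
  exact Subgroup.prod_mem _ fun j _ => Subgroup.zpow_mem _ (hu j) _

theorem isOfFinOrder_of_isOfFinOrder_prodZPow [DecidableEq n] {M : Matrix n n ℤ}
    (hdet : M.det ≠ 0) {u : n → G} (hMu : ∀ i, IsOfFinOrder (prodZPow M u i)) (i : n) :
    IsOfFinOrder (u i) := by
  have hdet_pow : IsOfFinOrder (u i ^ M.det) := by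
    rw [← prodZPow_smul_one, ← adjugate_mul, prodZPow_mul]
    exact isOfFinOrder_prodZPow _ hMu i
  exact hdet_pow.of_zpow hdet

end Matrix

/-- If `M` is an invertible `n × n` integer matrix and `θ₁, …, θₙ` are nonzero complex numbers
such that for each `i` the product `∏ j, θ j ^ (M i j)` is a root of unity, then each `θ i`
is a root of unity. -/
theorem roots_of_unity_of_invertible_exponent_matrix {n : ℕ}
    (M : Matrix (Fin n) (Fin n) ℤ) (hdet : M.det ≠ 0)
    (θ : Fin n → ℂ) (hθ : ∀ j, θ j ≠ 0)
    (hroot : ∀ i, ∃ N : ℕ, 1 ≤ N ∧ (∏ j, θ j ^ (M i j)) ^ N = 1) :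
    ∀ i, ∃ m : ℕ, 1 ≤ m ∧ θ i ^ m = 1 := by
  let u : Fin n → ℂˣ := fun j => Units.mk0 (θ j) (hθ j)
  have hMu : ∀ i, IsOfFinOrder (M.prodZPow u i) := fun i => by
    obtain ⟨N, hN, hpow⟩ := hroot i
    rw [← Units.isOfFinOrder_val, isOfFinOrder_iff_pow_eq_one]
    refine ⟨N, hN, ?_⟩
    simpa [Matrix.prodZPow, u] using hpow
  intro i
  obtain ⟨m, hm, hpow⟩ := isOfFinOrder_iff_pow_eq_one.mp
    (Units.isOfFinOrder_val.mpr (M.isOfFinOrder_of_isOfFinOrder_prodZPow hdet hMu i))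
  exact ⟨m, hm, hpow⟩
end

section
/- Let n be odd, ζ a primitive n-th root of unity in ℂ, and ξ an n-th root of unity. Define the matrix S indexed by Z/nZ by S_{k,l} = ξ^{k+l} ζ^{2kl}. Then S is invertible, and more precisely S^2 = n·ξ^{-k_0}·E where ξ = ζ^{k_0} and E is the permutation matrix of the involution k ↦ -k - k_0 on Z/nZ. -/
/-- For `n` odd, `ζ` a primitive `n`-th root of unity in `ℂ` and `ξ = ζ^k₀` an `n`-th root of
unity, the matrix `S` on `ℤ/nℤ` with `S k l = ξ^(k+l) ζ^(2kl)` is invertible, and more precisely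
`S² = n • ξ^{-k₀} • E` where `E` is the permutation matrix of the involution `k ↦ -k - k₀`. -/
theorem graded_vect_smatrix_square (n : ℕ) [NeZero n] (hodd : Odd n)
    (ζ : ℂ) (hζ : IsPrimitiveRoot ζ n) (k₀ : ℕ)
    (S E : Matrix (ZMod n) (ZMod n) ℂ)
    (hS : ∀ k l : ZMod n, S k l = ζ ^ (k₀ * (k + l).val) * ζ ^ (2 * (k * l).val))
    (hE : ∀ k l : ZMod n, E k l = if k = -l - (k₀ : ZMod n) then 1 else 0) :
    IsUnit S.det ∧ S * S = ((n : ℂ) * (ζ ^ (k₀ * k₀))⁻¹) • E := by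
  have hn : (n : ℕ) ≠ 0 := NeZero.ne n
  have hζn : ζ ^ n = 1 := hζ.pow_eq_one
  -- powers of ζ only depend on the exponent mod n
  have hpow : ∀ a b : ℕ, (a : ZMod n) = (b : ZMod n) → ζ ^ a = ζ ^ b := by
    intro a b hab
    rw [ZMod.natCast_eq_natCast_iff] at hab
    have h1 : ∀ x : ℕ, ζ ^ x = ζ ^ (x % n) := by
      intro x
      conv_lhs => rw [← Nat.mod_add_div x n, pow_add, pow_mul, hζn, one_pow, mul_one]
    rw [h1 a, h1 b, hab]
  have hval : ∀ x : ZMod n, ((x.val : ZMod n)) = x := by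
    intro x; simp [ZMod.natCast_val, ZMod.cast_id]
  -- 2 is a unit mod n
  have h2 : IsUnit (2 : ZMod n) := by
    have : ((2 : ℕ) : ZMod n) = (2 : ZMod n) := by push_cast; ring
    rw [← this, ZMod.isUnit_iff_coprime]
    exact Nat.coprime_two_left.mpr hodd
  -- the key vanishing sum
  have hsum : ∀ c : ZMod n, c ≠ 0 → ∑ m : ZMod n, (ζ ^ c.val) ^ m.val = 0 := by
    intro c hc
    have hw1 : ζ ^ c.val ≠ 1 := by
      intro h1
      rw [hζ.pow_eq_one_iff_dvd] at h1
      revert h1; intro hd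
      have hlt := ZMod.val_lt c
      have hne : c.val ≠ 0 := fun h => hc ((ZMod.val_eq_zero c).mp h)
      have := Nat.le_of_dvd (Nat.pos_of_ne_zero hne) hd
      omega
    have hwn : (ζ ^ c.val) ^ n = 1 := by
      rw [← pow_mul, mul_comm, pow_mul, hζn, one_pow]
    have hbij : ∑ m : ZMod n, (ζ ^ c.val) ^ m.val
        = ∑ i ∈ Finset.range n, (ζ ^ c.val) ^ i := by
      refine Finset.sum_nbij' (fun m => m.val) (fun i => (i : ZMod n)) ?_ ?_ ?_ ?_ ?_
      · intro a _; exact Finset.mem_range.mpr (ZMod.val_lt a)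
      · intro a _; exact Finset.mem_univ _
      · intro a _; exact hval a
      · intro a ha; exact ZMod.val_cast_of_lt (Finset.mem_range.mp ha)
      · intro a _; rfl
    rw [hbij, geom_sum_eq hw1, hwn, sub_self, zero_div]
  -- the main equation
  have hξ : ζ ^ (k₀ * k₀) ≠ 0 := pow_ne_zero _ (hζ.ne_zero hn)
  have hmain : S * S = ((n : ℂ) * (ζ ^ (k₀ * k₀))⁻¹) • E := by
    ext k l
    rw [Matrix.mul_apply, Matrix.smul_apply, hE]
    have hterm : ∀ m : ZMod n, S k m * S m l
        = ζ ^ (((k₀ : ZMod n) * (k + l)).val)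
          * (ζ ^ ((2 * ((k₀ : ZMod n) + k + l)).val)) ^ m.val := by
      intro m
      calc S k m * S m l
          = ζ ^ (k₀ * (k + m).val + 2 * (k * m).val + (k₀ * (m + l).val + 2 * (m * l).val)) := by
            rw [hS, hS, ← pow_add, ← pow_add, ← pow_add]
        _ = ζ ^ (((k₀ : ZMod n) * (k + l)).val + ((2 * ((k₀ : ZMod n) + k + l)).val * m.val)) := by
            apply hpow; push_cast [hval]; ring
        _ = _ := by rw [pow_add, pow_mul]
    rw [Finset.sum_congr rfl fun m _ => hterm m, ← Finset.mul_sum]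
    by_cases hc : 2 * ((k₀ : ZMod n) + k + l) = 0
    · -- diagonal case
      have hkl : (k₀ : ZMod n) + k + l = 0 := by
        apply h2.mul_left_cancel
        rw [hc, mul_zero]
      have hcond : k = -l - (k₀ : ZMod n) := by linear_combination hkl
      rw [if_pos hcond, hc]
      simp only [ZMod.val_zero, pow_zero, one_pow, Finset.sum_const, Finset.card_univ,
        ZMod.card, nsmul_eq_mul, mul_one]
      have hinv : ζ ^ (((k₀ : ZMod n) * (k + l)).val) = (ζ ^ (k₀ * k₀))⁻¹ := by
        refine eq_inv_of_mul_eq_one_left ?_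
        rw [← pow_add]
        have : ((((k₀ : ZMod n) * (k + l)).val + k₀ * k₀ : ℕ) : ZMod n) = ((0 : ℕ) : ZMod n) := by
          push_cast [hval]
          have hkl' : k + l = -(k₀ : ZMod n) := by linear_combination hkl
          rw [hkl']; ring
        rw [hpow _ 0 this, pow_zero]
      rw [hinv, smul_eq_mul, mul_one]; ring
    · -- off-diagonal case
      rw [hsum _ hc, mul_zero]
      have hcond : ¬ (k = -l - (k₀ : ZMod n)) := by
        intro h
        apply hc
        rw [h]; ring
      rw [if_neg hcond, smul_zero]
  refine ⟨?_, hmain⟩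
  -- E is an involution
  have hEE : E * E = 1 := by
    ext k l
    rw [Matrix.mul_apply, Matrix.one_apply]
    have h1 : ∀ m : ZMod n, E k m * E m l
        = if m = -k - (k₀ : ZMod n) then (if m = -l - (k₀ : ZMod n) then 1 else 0) else 0 := by
      intro m
      rw [hE, hE]
      have : (k = -m - (k₀ : ZMod n)) ↔ (m = -k - (k₀ : ZMod n)) := by
        constructor <;> intro h <;> linear_combination h
      by_cases hm : m = -k - (k₀ : ZMod n)
      · rw [if_pos (this.mpr hm), if_pos hm, one_mul]
      · rw [if_neg (fun h => hm (this.mp h)), if_neg hm, zero_mul]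
    rw [Finset.sum_congr rfl fun m _ => h1 m, Finset.sum_ite_eq' Finset.univ]
    simp only [Finset.mem_univ, if_true]
    by_cases hkl : k = l
    · rw [if_pos (by rw [hkl]), if_pos hkl]
    · rw [if_neg (fun h => hkl (by linear_combination -h)), if_neg hkl]
  set c : ℂ := (n : ℂ) * (ζ ^ (k₀ * k₀))⁻¹ with hcdef
  have hc0 : c ≠ 0 := by
    apply mul_ne_zero
    · exact_mod_cast hn
    · exact inv_ne_zero hξ
  have hright : S * (c⁻¹ • (S * E)) = 1 := by
    rw [Matrix.mul_smul, ← Matrix.mul_assoc, hmain, Matrix.smul_mul, hEE, smul_smul,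
      inv_mul_cancel₀ hc0, one_smul]
  exact Matrix.isUnit_det_of_right_inverse hright
end

section
/- Let d ≥ 2 and ζ a primitive d-th root of unity. The matrix S indexed by pairs (l,p), 1 ≤ l < d, p ∈ ℤ/dℤ, with entries S_{(l,p),(l',p')} = (ζ/(1−ζ))ζ^{−ll'−lp'−pl'−2pp'}(1−ζ^{ll'}), satisfies S_{(l,p),(l',p')} = −S_{(d−l, l+p),(l',p')} for all entries; consequently rank(S) ≤ d(d−1)/2. -/
/-!
Modulo `d`, the exponent of `ζ` in row `(d - l, l + p)` exceeds the one in row `(l, p)` by `l l'`,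
while `1 - ζ^{(d - l) l'} = 1 - ζ^{-l l'}`; since `ζ^x (1 - ζ^{-x}) = -(1 - ζ^x)`, the two rows are
negatives of each other. The map `(l, p) ↦ (d - l, l + p)` is a fixed-point-free involution of the
index set, so the rows indexed by one element of each of its `d (d - 1) / 2` orbits span the row
space.
-/

open Function Finset Submodule

theorem Function.Involutive.exists_finset_two_mul_card_le {ι : Type*} [Fintype ι] {σ : ι → ι}
    (hσ : Involutive σ) (hfix : ∀ x, σ x ≠ x) :
    ∃ s : Finset ι, 2 * #s ≤ Fintype.card ι ∧ ∀ x, x ∈ s ∨ σ x ∈ s := by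
  classical
  let e := Fintype.equivFin ι
  set s := univ.filter fun x => e x < e (σ x) with hs
  refine ⟨s, ?_, fun x => ?_⟩
  · have hmaps : ∀ x ∈ s, σ x ∈ sᶜ := by
      intro x hx
      simp only [hs, mem_compl, mem_filter, mem_univ, true_and, hσ x] at hx ⊢
      exact hx.le.not_gt
    have := card_le_card_of_injOn σ hmaps hσ.injective.injOn
    have := card_add_card_compl s
    omega
  · rcases lt_or_gt_of_ne (e.injective.ne (hfix x).symm) with h | h
    · exact .inl (by simpa [hs] using h)
    · exact .inr (by simpa [hs, hσ x] using h)

namespace Matrix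

variable {m n R : Type*} [Field R] [Fintype m] [Fintype n]

theorem rank_le_card_of_row_mem_span (A : Matrix m n R) (s : Finset m)
    (h : ∀ i, A.row i ∈ span R (A.row '' s)) : A.rank ≤ #s := by
  classical
  rw [rank_eq_finrank_span_row]
  calc Module.finrank R (span R (Set.range A.row))
      ≤ Module.finrank R (span R (A.row '' s)) :=
        finrank_mono (span_le.2 (Set.range_subset_iff.2 h))
    _ ≤ #(s.image A.row) := by rw [← coe_image]; exact finrank_span_finset_le_card _
    _ ≤ #s := card_image_le

theorem two_mul_rank_le_of_row_comp_eq_neg (A : Matrix m n R) {σ : m → m} (hσ : Involutive σ)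
    (hfix : ∀ i, σ i ≠ i) (hA : ∀ i, A (σ i) = -A i) : 2 * A.rank ≤ Fintype.card m := by
  obtain ⟨s, hcard, hs⟩ := hσ.exists_finset_two_mul_card_le hfix
  refine le_trans (Nat.mul_le_mul_left 2 (A.rank_le_card_of_row_mem_span s fun i => ?_)) hcard
  rcases hs i with hi | hi
  · exact subset_span ⟨i, hi, rfl⟩
  · have : A.row (σ i) ∈ span R (A.row '' s) := subset_span ⟨σ i, hi, rfl⟩
    simpa only [row, hA, neg_neg] using neg_mem this

end Matrix

theorem zpow_eq_zpow_of_modEq {G₀ : Type*} [GroupWithZero G₀] {ζ : G₀} (hζ0 : ζ ≠ 0) {n a b : ℤ}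
    (hζ : ζ ^ n = 1) (h : a ≡ b [ZMOD n]) : ζ ^ a = ζ ^ b := by
  obtain ⟨c, hc⟩ := h.dvd
  rw [show b = a + n * c by omega, zpow_add₀ hζ0, zpow_mul, hζ, one_zpow, mul_one]

section TaftSMatrix

variable {K : Type*} [Field K]

def taftSEntry (ζ : K) (l p l' p' : ℤ) : K :=
  ζ / (1 - ζ) * ζ ^ (-(l * l') - l * p' - p * l' - 2 * p * p') * (1 - ζ ^ (l * l'))

theorem taftSEntry_congr_left {ζ : K} {n p q : ℤ} (hζ0 : ζ ≠ 0) (hζ : ζ ^ n = 1)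
    (h : p ≡ q [ZMOD n]) (l l' p' : ℤ) : taftSEntry ζ l p l' p' = taftSEntry ζ l q l' p' := by
  unfold taftSEntry
  congr 2
  apply zpow_eq_zpow_of_modEq hζ0 hζ
  gcongr

theorem taftSEntry_sub_add {ζ : K} {n : ℤ} (hζ0 : ζ ≠ 0) (hζ : ζ ^ n = 1) (l p l' p' : ℤ) :
    taftSEntry ζ (n - l) (l + p) l' p' = -taftSEntry ζ l p l' p' := by
  unfold taftSEntry
  set x := l * l'
  set e := -(l * l') - l * p' - p * l' - 2 * p * p'
  have hexp : ζ ^ (-((n - l) * l') - (n - l) * p' - (l + p) * l' - 2 * (l + p) * p')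
      = ζ ^ x * ζ ^ e := by
    rw [← zpow_add₀ hζ0]
    exact zpow_eq_zpow_of_modEq hζ0 hζ (Int.modEq_iff_dvd.2 ⟨l' + p', by ring⟩)
  have hfactor : ζ ^ ((n - l) * l') = ζ ^ (-x) :=
    zpow_eq_zpow_of_modEq hζ0 hζ (Int.modEq_iff_dvd.2 ⟨-l', by ring⟩)
  have hinv : ζ ^ x * ζ ^ (-x) = 1 := by rw [← zpow_add₀ hζ0, add_neg_cancel, zpow_zero]
  rw [hexp, hfactor]
  linear_combination (-(ζ / (1 - ζ) * ζ ^ e)) * hinv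

/-- The index `(i, p)` stands for the simple object `M_{i+1,p}`; this map is `ε ⊗ -`,
`(l, p) ↦ (d - l, l + p)`. -/
def tensorTransparent {d : ℕ} (x : Fin (d - 1) × ZMod d) : Fin (d - 1) × ZMod d :=
  (x.1.rev, x.2 + ((x.1 + 1 : ℕ) : ZMod d))

theorem tensorTransparent_involutive {d : ℕ} : Involutive (tensorTransparent (d := d)) := by
  rintro ⟨i, p⟩
  have hsum : (i + 1 : ℕ) + (i.rev + 1 : ℕ) = d := by have := i.isLt; rw [Fin.val_rev]; omega
  simp only [tensorTransparent, Fin.rev_rev, add_assoc, ← Nat.cast_add, hsum, ZMod.natCast_self,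
    add_zero]

theorem tensorTransparent_ne {d : ℕ} (x : Fin (d - 1) × ZMod d) : tensorTransparent x ≠ x := by
  intro h
  have hzero : ((x.1 + 1 : ℕ) : ZMod d) = 0 := by
    simpa [tensorTransparent] using congrArg Prod.snd h
  have := Nat.le_of_dvd (Nat.succ_pos _) ((ZMod.natCast_eq_zero_iff _ _).1 hzero)
  have := x.1.isLt
  omega

def taftSMatrix (ζ : K) (d : ℕ) :
    Matrix (Fin (d - 1) × ZMod d) (Fin (d - 1) × ZMod d) K :=
  Matrix.of fun i j => taftSEntry ζ ((i.1 : ℕ) + 1) i.2.val ((j.1 : ℕ) + 1) j.2.val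

theorem taftSMatrix_tensorTransparent {d : ℕ} [NeZero d] {ζ : K} (hζ0 : ζ ≠ 0)
    (hζ : ζ ^ (d : ℤ) = 1) (x : Fin (d - 1) × ZMod d) :
    taftSMatrix ζ d (tensorTransparent x) = -taftSMatrix ζ d x := by
  ext j
  obtain ⟨i, p⟩ := x
  have hl : ((i.rev : ℕ) : ℤ) + 1 = d - ((i : ℕ) + 1) := by
    have := i.isLt; rw [Fin.val_rev]; omega
  have hp : ((p + ((i + 1 : ℕ) : ZMod d)).val : ℤ) ≡ ((i : ℕ) + 1) + p.val [ZMOD d] := by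
    rw [← ZMod.intCast_eq_intCast_iff]
    push_cast [ZMod.natCast_zmod_val]
    ring
  simp only [taftSMatrix, tensorTransparent, Matrix.of_apply, Pi.neg_apply, hl]
  rw [taftSEntry_congr_left hζ0 hζ hp, taftSEntry_sub_add hζ0 hζ]

end TaftSMatrix

theorem smatrix_row_negation_general (d : ℕ) [NeZero d]
    (ζ : ℂ) (hζ : IsPrimitiveRoot ζ d)
    (f : ℤ → ℤ → ℤ → ℤ → ℂ)
    (hf : ∀ l p l' p' : ℤ, f l p l' p' =
      (ζ / (1 - ζ)) * ζ ^ (-(l * l') - l * p' - p * l' - 2 * p * p') * (1 - ζ ^ (l * l'))) :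
    (∀ l p l' p' : ℤ, 1 ≤ l → l < d → f l p l' p' = -f ((d : ℤ) - l) (l + p) l' p') ∧
    (Matrix.of (fun (i j : Fin (d - 1) × ZMod d) =>
        f (((i.1 : ℕ) : ℤ) + 1) ((i.2.val : ℤ)) (((j.1 : ℕ) : ℤ) + 1) ((j.2.val : ℤ)))).rank
      ≤ d * (d - 1) / 2 := by
  obtain rfl : f = taftSEntry ζ := by funext l p l' p'; exact hf l p l' p'
  have hζ0 : ζ ≠ 0 := hζ.ne_zero (NeZero.ne d)
  have hζd : ζ ^ (d : ℤ) = 1 := by rw [zpow_natCast, hζ.pow_eq_one]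
  refine ⟨fun l p l' p' _ _ => by rw [taftSEntry_sub_add hζ0 hζd, neg_neg], ?_⟩
  have h := (taftSMatrix ζ d).two_mul_rank_le_of_row_comp_eq_neg tensorTransparent_involutive
    tensorTransparent_ne (taftSMatrix_tensorTransparent hζ0 hζd)
  rw [Fintype.card_prod, Fintype.card_fin, ZMod.card, mul_comm (d - 1)] at h
  exact (Nat.le_div_iff_mul_le two_pos).2 (by rw [mul_comm]; exact h)

/-- For `ζ` a primitive `d`-th root of unity, the `S`-matrix
`S_{(l,p),(l',p')} = (ζ/(1-ζ)) ζ^{-ll'-lp'-pl'-2pp'} (1-ζ^{ll'})` of the semisimplified double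
of the Taft algebra satisfies `S_{(l,p),(l',p')} = -S_{(d-l,l+p),(l',p')}`; consequently its
rank is at most `d(d-1)/2`. -/
theorem smatrix_row_negation (d : ℕ) [NeZero d] (hd : 2 ≤ d)
    (ζ : ℂ) (hζ : IsPrimitiveRoot ζ d)
    (f : ℤ → ℤ → ℤ → ℤ → ℂ)
    (hf : ∀ l p l' p' : ℤ, f l p l' p' =
      (ζ / (1 - ζ)) * ζ ^ (-(l * l') - l * p' - p * l' - 2 * p * p') * (1 - ζ ^ (l * l'))) :
    (∀ l p l' p' : ℤ, 1 ≤ l → l < d → f l p l' p' = -f ((d : ℤ) - l) (l + p) l' p') ∧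
    (Matrix.of (fun (i j : Fin (d - 1) × ZMod d) =>
        f (((i.1 : ℕ) : ℤ) + 1) ((i.2.val : ℤ)) (((j.1 : ℕ) : ℤ) + 1) ((j.2.val : ℤ)))).rank
      ≤ d * (d - 1) / 2 :=
  smatrix_row_negation_general d ζ hζ f hf
end

section
/- Let C be a braided pivotal fusion category and C^rev the same category with reverse braiding c^rev_{X,Y} = c_{Y,X}^{-1}. Then for all simple objects X, Y: S^{rev,L,R}_{X,Y} = S^{R,R}_{Y,X*}, where S^{L,R}_{X,Y} = Tr^{L,R}_{X⊗Y}(c_{Y,X} ∘ c_{X,Y}) and S^{R,R}_{X,Y} = Tr^R_{X⊗Y}(c_{Y,X} ∘ c_{X,Y}). -/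
/-!
Both sides are right traces over `Y` of an endomorphism of `Y` around which a loop winds, closed
by the cup `𝟙 ⟶ X* ⊗ X` built from the pivotal structure and the evaluation `X* ⊗ X ⟶ 𝟙`. For `S^{rev,L,R}`
this comes from exchanging the two traces, and the loop meets the inverse double braiding of `X`
with `Y`. For `S^{R,R}_{Y,X*}`, the compatibility `a_{X*} = (a_X⁻¹)*` lets the partial trace over
`X*` be closed by the same cup and cap, now meeting the double braiding of `Y` with `X*`. The two
loops agree: by naturality the cup and cap slide through the braiding with `Y`, and the hexagon
axioms turn the conjugated inverse double braiding with `X` into the double braiding with `X*`.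
-/

open CategoryTheory MonoidalCategory

noncomputable section

variable {C : Type*} [Category C] [MonoidalCategory C] [RightRigidCategory C]

/-- The (right) dual of an object. -/
abbrev rd (X : C) [HasRightDual X] : C := HasRightDual.rightDual X

/-- The right quantum trace of `f : X ⟶ X` with respect to a pivotal structure `a`. -/
def qTrR (a : ∀ X : C, X ≅ rd (rd X)) {X : C} (f : X ⟶ X) : 𝟙_ C ⟶ 𝟙_ C :=
  η_ X (rd X) ≫ ((f ≫ (a X).hom) ▷ rd X) ≫ ε_ (rd X) (rd (rd X))

/-- The left quantum trace of `f : X ⟶ X` with respect to a pivotal structure `a`. -/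
def qTrL (a : ∀ X : C, X ≅ rd (rd X)) {X : C} (f : X ⟶ X) : 𝟙_ C ⟶ 𝟙_ C :=
  η_ (rd X) (rd (rd X)) ≫ (rd X ◁ ((a X).inv ≫ f)) ≫ ε_ X (rd X)

/-- The right partial trace `id_X ⊗ Tr^R_Y` of `f : X ⊗ Y ⟶ X ⊗ Y`. -/
def qPTrR (a : ∀ X : C, X ≅ rd (rd X)) {X Y : C} (f : X ⊗ Y ⟶ X ⊗ Y) : X ⟶ X :=
  (ρ_ X).inv ≫ (X ◁ η_ Y (rd Y)) ≫ (α_ X Y (rd Y)).inv ≫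
    ((f ≫ (X ◁ (a Y).hom)) ▷ rd Y) ≫ (α_ X (rd (rd Y)) (rd Y)).hom ≫
    (X ◁ ε_ (rd Y) (rd (rd Y))) ≫ (ρ_ X).hom

variable [BraidedCategory C]

/-- The entry `S^{R,R}_{X,Y} = Tr^R_X ((id_X ⊗ Tr^R_Y)(c_{Y,X} ∘ c_{X,Y}))` of the
`S`-matrix of `C`. -/
def SRR (a : ∀ X : C, X ≅ rd (rd X)) (X Y : C) : 𝟙_ C ⟶ 𝟙_ C :=
  qTrR a (qPTrR a ((β_ X Y).hom ≫ (β_ Y X).hom))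

/-- The entry `S^{rev,L,R}_{X,Y} = Tr^L_X ((id_X ⊗ Tr^R_Y)(c^rev_{Y,X} ∘ c^rev_{X,Y}))` of the
mixed `S`-matrix of the reverse-braided category `C^rev`, computed with the same pivotal
structure; here `c^rev_{X,Y} = c_{Y,X}⁻¹`. -/
def SrevLR (a : ∀ X : C, X ≅ rd (rd X)) (X Y : C) : 𝟙_ C ⟶ 𝟙_ C :=
  qTrL a (qPTrR a ((β_ Y X).inv ≫ (β_ X Y).inv))

end

section Braided

variable {C : Type*} [Category C] [MonoidalCategory C] [BraidedCategory C]

theorem whiskerRight_monodromy_eq (Y A B : C) :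
    ((β_ Y A).hom ≫ (β_ A Y).hom) ▷ B =
      𝟙 _ ⊗≫ (β_ Y (A ⊗ B)).hom ⊗≫ A ◁ ((β_ Y B).inv ≫ (β_ B Y).inv) ⊗≫
        (β_ (A ⊗ B) Y).hom ⊗≫ 𝟙 _ := by
  simp [monoidalComp]

open BraidedCategory in
theorem cupCap_inverseMonodromy_eq_monodromy {A B : C} (n : 𝟙_ C ⟶ A ⊗ B) (e : A ⊗ B ⟶ 𝟙_ C)
    (Y : C) :
    (λ_ Y).inv ≫ n ▷ Y ⊗≫ A ◁ ((β_ Y B).inv ≫ (β_ B Y).inv) ⊗≫ e ▷ Y ≫ (λ_ Y).hom =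
      (ρ_ Y).inv ≫ Y ◁ n ⊗≫ ((β_ Y A).hom ≫ (β_ A Y).hom) ▷ B ⊗≫ Y ◁ e ≫ (ρ_ Y).hom := by
  have hn : (λ_ Y).inv ≫ n ▷ Y = (ρ_ Y).inv ≫ Y ◁ n ≫ (β_ Y (A ⊗ B)).hom := by
    rw [braiding_naturality_right, braiding_tensorUnit_right]; simp
  have he : e ▷ Y ≫ (λ_ Y).hom = (β_ (A ⊗ B) Y).hom ≫ Y ◁ e ≫ (ρ_ Y).hom := by
    rw [← braiding_naturality_left_assoc, braiding_tensorUnit_left]; simp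
  calc
    _ = ((λ_ Y).inv ≫ n ▷ Y) ⊗≫ A ◁ ((β_ Y B).inv ≫ (β_ B Y).inv) ⊗≫ (e ▷ Y ≫ (λ_ Y).hom) := by
      monoidal
    _ = _ := by
      rw [hn, he, whiskerRight_monodromy_eq]
      monoidal

end Braided

section Pivotal

variable {C : Type*} [Category C] [MonoidalCategory C] [RightRigidCategory C]

/-- The coevaluation of `rd X` as a left dual of `X`, transported along the pivotal structure. -/
def pivotalCoevaluation (a : ∀ X : C, X ≅ rd (rd X)) (X : C) : 𝟙_ C ⟶ rd X ⊗ X :=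
  η_ (rd X) (rd (rd X)) ≫ rd X ◁ (a X).inv

theorem qTrL_eq_pivotalCoevaluation_comp (a : ∀ X : C, X ≅ rd (rd X)) {X : C} (f : X ⟶ X) :
    qTrL a f = pivotalCoevaluation a X ≫ rd X ◁ f ≫ ε_ X (rd X) := by
  simp [qTrL, pivotalCoevaluation]

theorem comp_whiskerLeft_qPTrR_comp_eq_qTrR (a : ∀ X : C, X ≅ rd (rd X)) {A B Y : C}
    (n : 𝟙_ C ⟶ A ⊗ B) (e : A ⊗ B ⟶ 𝟙_ C) (h : B ⊗ Y ⟶ B ⊗ Y) :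
    n ≫ A ◁ qPTrR a h ≫ e = qTrR a ((λ_ Y).inv ≫ n ▷ Y ⊗≫ A ◁ h ⊗≫ e ▷ Y ≫ (λ_ Y).hom) := by
  dsimp only [qTrR, qPTrR]
  calc
    _ = 𝟙 _ ⊗≫ (n ⊗ₘ η_ Y (rd Y)) ⊗≫ A ◁ (h ▷ rd Y) ⊗≫
          (e ⊗ₘ ((a Y).hom ▷ rd Y ≫ ε_ (rd Y) (rd (rd Y)))) ⊗≫ 𝟙 _ := by
      rw [tensorHom_def n, tensorHom_def' e]; monoidal
    _ = _ := by
      rw [tensorHom_def' n, tensorHom_def e]; monoidal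

theorem qPTrR_rd_eq_pivotalCoevaluation (a : ∀ X : C, X ≅ rd (rd X)) {X : C}
    (ha : (a (rd X)).hom = rightAdjointMate (a X).inv) {Y : C} (g : Y ⊗ rd X ⟶ Y ⊗ rd X) :
    qPTrR a g =
      (ρ_ Y).inv ≫ Y ◁ pivotalCoevaluation a X ⊗≫ g ▷ X ⊗≫ Y ◁ ε_ X (rd X) ≫ (ρ_ Y).hom := by
  have hε : (a (rd X)).hom ▷ rd (rd X) ≫ ε_ (rd (rd X)) (rd (rd (rd X))) =
      rd X ◁ (a X).inv ≫ ε_ X (rd X) := by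
    rw [ha, rightAdjointMate_comp_evaluation]
  dsimp only [qPTrR, pivotalCoevaluation]
  calc
    _ = (ρ_ Y).inv ≫ Y ◁ η_ (rd X) (rd (rd X)) ⊗≫ g ▷ rd (rd X) ⊗≫
          Y ◁ ((a (rd X)).hom ▷ rd (rd X) ≫ ε_ (rd (rd X)) (rd (rd (rd X)))) ≫ (ρ_ Y).hom := by
      monoidal
    _ = (ρ_ Y).inv ≫ Y ◁ η_ (rd X) (rd (rd X)) ⊗≫
          (g ▷ rd (rd X) ≫ (Y ⊗ rd X) ◁ (a X).inv) ⊗≫ Y ◁ ε_ X (rd X) ≫ (ρ_ Y).hom := by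
      rw [hε]; monoidal
    _ = _ := by
      rw [← whisker_exchange]; monoidal

end Pivotal

variable {C : Type*} [Category C] [MonoidalCategory C] [RightRigidCategory C] [BraidedCategory C]

theorem Srev_eq_SRR_dual_general
    (a : ∀ X : C, X ≅ rd (rd X))
    (hmon : ∀ X : C, (a (rd X)).hom = rightAdjointMate (a X).inv)
    (X Y : C) :
    SrevLR a X Y = SRR a Y (rd X) := by
  calc SrevLR a X Y
      = pivotalCoevaluation a X ≫ rd X ◁ qPTrR a ((β_ Y X).inv ≫ (β_ X Y).inv) ≫
          ε_ X (rd X) := qTrL_eq_pivotalCoevaluation_comp a _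
    _ = qTrR a ((λ_ Y).inv ≫ pivotalCoevaluation a X ▷ Y ⊗≫
          rd X ◁ ((β_ Y X).inv ≫ (β_ X Y).inv) ⊗≫ ε_ X (rd X) ▷ Y ≫ (λ_ Y).hom) :=
      comp_whiskerLeft_qPTrR_comp_eq_qTrR a _ _ _
    _ = qTrR a ((ρ_ Y).inv ≫ Y ◁ pivotalCoevaluation a X ⊗≫
          ((β_ Y (rd X)).hom ≫ (β_ (rd X) Y).hom) ▷ X ⊗≫ Y ◁ ε_ X (rd X) ≫ (ρ_ Y).hom) := by
      rw [cupCap_inverseMonodromy_eq_monodromy]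
    _ = SRR a Y (rd X) := by
      rw [SRR, qPTrR_rd_eq_pivotalCoevaluation a (hmon X)]

/-- Let `C` be a braided pivotal fusion category and `C^rev` the same category with the reverse
braiding. Then for all simple objects `X`, `Y` one has `S^{rev,L,R}_{X,Y} = S^{R,R}_{Y,X*}`. -/
theorem Srev_eq_SRR_dual [Preadditive C]
    (a : ∀ X : C, X ≅ rd (rd X))
    (hnat : ∀ {X Y : C} (f : X ⟶ Y),
      f ≫ (a Y).hom = (a X).hom ≫ rightAdjointMate (rightAdjointMate f))
    (hmon : ∀ X : C, (a (rd X)).hom = rightAdjointMate (a X).inv)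
    (X Y : C) (hX : Simple X) (hY : Simple Y) :
    SrevLR a X Y = SRR a Y (rd X) :=
  Srev_eq_SRR_dual_general a hmon X Y
end
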